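/- arXiv:1704.02860 — 2 statements merged into one kernel-verified Lean document; each statement's English description precedes it below -/
import Mathlib

section
/- Let p ≥ 1 be an integer and χ = (χ_1,...,χ_p) ∈ ℝ^p with χ_i ≥ 0 and |χ|_1 := Σ_{i=1}^p χ_i < 1. Then there exist constants λ_0 ∈ (0,1) and C_λ > 0, depending only on χ and p, such that for every pair of nonnegative real sequences (z_s)_{s > −p} and (μ_s)_{s ≥ 1} satisfying z_s ≤ Σ_{i=1}^p χ_i z_{s−i} + μ_s for all s = 1,2,..., one has z_s ≤ C_λ ( λ_0^s (z_0 + z_{−1} + ... + z_{−p+1}) + Σ_{i=0}^{s−1} λ_0^i μ_{s−i} ) for all s = 1,2,.... -/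
open Finset

/-- **Recursion lemma** (Lemma 6.2.10 style): if `p ≥ 1`, `χ ∈ ℝ^p` is nonnegative with
`|χ|₁ < 1`, then there are constants `λ₀ ∈ (0,1)` and `C_λ > 0`, depending only on `χ` and `p`,
such that every pair of nonnegative sequences `(z_s)_{s > -p}`, `(μ_s)_{s ≥ 1}` with
`z_s ≤ ∑ᵢ χᵢ z_{s-i} + μ_s` for `s ≥ 1` satisfies
`z_s ≤ C_λ (λ₀^s (z_0 + ⋯ + z_{-p+1}) + ∑_{i=0}^{s-1} λ₀^i μ_{s-i})` for all `s ≥ 1`. -/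
theorem recursion_lemma (p : ℕ) (hp : 1 ≤ p) (χ : Fin p → ℝ)
    (hχ0 : ∀ i, 0 ≤ χ i) (hχ1 : ∑ i, χ i < 1) :
    ∃ lam : ℝ, lam ∈ Set.Ioo (0:ℝ) 1 ∧ ∃ C : ℝ, 0 < C ∧
      ∀ z : ℤ → ℝ, ∀ μs : ℕ → ℝ,
        (∀ s : ℤ, -(p:ℤ) < s → 0 ≤ z s) →
        (∀ s : ℕ, 1 ≤ s → 0 ≤ μs s) →
        (∀ s : ℕ, 1 ≤ s →
          z (s : ℤ) ≤ (∑ i : Fin p, χ i * z ((s : ℤ) - ((i : ℕ) + 1 : ℤ))) + μs s) →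
        ∀ s : ℕ, 1 ≤ s →
          z (s : ℤ) ≤ C * (lam ^ s * (∑ j ∈ range p, z (-(j : ℤ)))
            + ∑ i ∈ range s, lam ^ i * μs (s - i)) := by
  set c := ∑ i, χ i with hc
  have hc0 : 0 ≤ c := Finset.sum_nonneg fun i _ => hχ0 i
  set d : ℝ := (c + 1) / 2 with hd
  have hd0 : 0 < d := by rw [hd]; linarith
  have hcd : c < d := by rw [hd]; linarith
  have hd1 : d < 1 := by rw [hd]; linarith
  have hp0 : (0:ℝ) < (p:ℝ) := by exact_mod_cast hp
  set lam : ℝ := d ^ ((p:ℝ)⁻¹) with hlam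
  have hlam0 : 0 < lam := Real.rpow_pos_of_pos hd0 _
  have hlam1 : lam < 1 := Real.rpow_lt_one hd0.le hd1 (inv_pos.mpr hp0)
  have hlamp : lam ^ p = d := by
    rw [hlam, ← Real.rpow_natCast (d ^ ((p:ℝ)⁻¹)) p, ← Real.rpow_mul hd0.le,
      inv_mul_cancel₀ hp0.ne', Real.rpow_one]
  have hkey : (∑ i : Fin p, χ i / lam ^ (i:ℕ)) ≤ lam := by
    have h1 : (∑ i : Fin p, χ i / lam ^ (i:ℕ)) ≤ ∑ i : Fin p, χ i / lam ^ (p-1) := by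
      apply Finset.sum_le_sum
      intro i _
      have hip : (i:ℕ) ≤ p - 1 := Nat.le_pred_of_lt i.isLt
      have hpow : lam ^ (p-1) ≤ lam ^ (i:ℕ) :=
        pow_le_pow_of_le_one hlam0.le hlam1.le hip
      exact div_le_div_of_nonneg_left (hχ0 i) (pow_pos hlam0 _) hpow
    have h2 : (∑ i : Fin p, χ i / lam ^ (p-1)) = c / lam ^ (p-1) := by
      rw [← Finset.sum_div]
    calc (∑ i : Fin p, χ i / lam ^ (i:ℕ)) ≤ c / lam ^ (p-1) := h2 ▸ h1
      _ ≤ lam := by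
          rw [div_le_iff₀ (pow_pos hlam0 _)]
          calc c ≤ d := hcd.le
            _ = lam ^ p := hlamp.symm
            _ = lam * lam ^ (p-1) := by
                rw [mul_comm, ← pow_succ, Nat.sub_add_cancel hp]
  refine ⟨lam, ⟨hlam0, hlam1⟩, 1, one_pos, ?_⟩
  intro z μs hz hμ hrec
  set A := ∑ j ∈ range p, z (-(j:ℤ)) with hA
  have hA0 : 0 ≤ A :=
    Finset.sum_nonneg fun j hj => hz _ (by simp only [Finset.mem_range] at hj; omega)
  set M : ℤ → ℝ := fun t => ∑ i ∈ range t.toNat, lam ^ i * μs (t.toNat - i) with hM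
  have hM0 : ∀ t : ℤ, 0 ≤ M t := by
    intro t
    apply Finset.sum_nonneg
    intro i hi
    simp only [Finset.mem_range] at hi
    exact mul_nonneg (pow_nonneg hlam0.le _) (hμ _ (by omega))
  have hMneg : ∀ t : ℤ, t ≤ 0 → M t = 0 := by
    intro t ht
    simp [hM, Int.toNat_of_nonpos ht]
  have hMstep : ∀ t : ℤ, 1 ≤ t → M t = lam * M (t-1) + μs t.toNat := by
    intro t ht
    obtain ⟨n, hn⟩ : ∃ n : ℕ, t.toNat = n + 1 := ⟨t.toNat - 1, by omega⟩
    have hn' : (t-1).toNat = n := by omega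
    simp only [hM, hn, hn', Finset.sum_range_succ']
    rw [Finset.mul_sum]
    congr 1
    · apply Finset.sum_congr rfl
      intro i _
      have h : n + 1 - (i+1) = n - i := by omega
      rw [h]; ring
    · simp
  set B : ℤ → ℝ := fun t => lam ^ t * A + M t with hB
  have hB0 : ∀ t : ℤ, 0 ≤ B t := by
    intro t
    exact add_nonneg (mul_nonneg (zpow_pos hlam0 t).le hA0) (hM0 t)
  have hBstep : ∀ t : ℤ, 1 ≤ t → B t = lam * B (t-1) + μs t.toNat := by
    intro t ht
    have h1 : lam ^ t = lam ^ (t-1) * lam := by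
      rw [← zpow_add_one₀ hlam0.ne', sub_add_cancel]
    simp only [hB]
    rw [hMstep t ht, h1]
    ring
  have hBmono : ∀ t : ℤ, lam * B t ≤ B (t+1) := by
    intro t
    rcases le_or_gt 1 (t+1) with h | h
    · rw [hBstep (t+1) h, add_sub_cancel_right]
      have h0 : 0 ≤ μs (t+1).toNat := hμ _ (by omega)
      linarith
    · have h1 : M t = 0 := hMneg t (by omega)
      have h2 : M (t+1) = 0 := hMneg _ (by omega)
      simp only [hB, h1, h2, add_zero]
      rw [zpow_add_one₀ hlam0.ne']
      exact le_of_eq (by ring)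
  have hiter : ∀ (k : ℕ) (t : ℤ), lam ^ k * B t ≤ B (t + k) := by
    intro k
    induction k with
    | zero => intro t; simp
    | succ k ih =>
      intro t
      calc lam ^ (k+1) * B t = lam ^ k * (lam * B t) := by ring
        _ ≤ lam ^ k * B (t+1) :=
            mul_le_mul_of_nonneg_left (hBmono t) (pow_nonneg hlam0.le k)
        _ ≤ B (t+1+k) := ih (t+1)
        _ = B (t + (k+1:ℕ)) := by congr 1; push_cast; ring
  have main : ∀ n : ℕ, ∀ t : ℤ, -(p:ℤ) < t → t ≤ n → z t ≤ B t := by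
    intro n
    induction n with
    | zero =>
      intro t ht ht0
      have hzA : z t ≤ A := by
        obtain ⟨j, hj, hjt⟩ : ∃ j : ℕ, j < p ∧ t = -(j:ℤ) := ⟨(-t).toNat, by omega, by omega⟩
        subst hjt
        exact Finset.single_le_sum (f := fun j : ℕ => z (-(j:ℤ)))
          (fun j hj => hz _ (by simp only [Finset.mem_range] at hj; omega))
          (Finset.mem_range.mpr hj)
      have h1 : (1:ℝ) ≤ lam ^ t := by
        have he : lam ^ t = (lam ^ (-t).toNat)⁻¹ := by
          rw [← zpow_natCast, ← zpow_neg]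
          congr 1
          omega
        rw [he]
        exact (one_le_inv₀ (pow_pos hlam0 _)).mpr (pow_le_one₀ hlam0.le hlam1.le)
      have h2 : M t = 0 := hMneg t ht0
      calc z t ≤ A := hzA
        _ ≤ lam ^ t * A := le_mul_of_one_le_left hA0 h1
        _ = B t := by simp [hB, h2]
    | succ n ih =>
      intro t ht htn
      rcases le_or_gt t n with h | h
      · exact ih t ht h
      · have hts : t = ((n+1 : ℕ) : ℤ) := by push_cast; omega
        set s : ℤ := ((n+1:ℕ):ℤ) with hsdef
        have hBi : ∀ i : Fin p, z (s - ((i:ℕ)+1)) ≤ B (s-1) / lam ^ (i:ℕ) := by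
          intro i
          have hi := i.isLt
          have h1 : z (s - ((i:ℕ)+1)) ≤ B (s - ((i:ℕ)+1)) :=
            ih _ (by simp only [hsdef]; push_cast; omega)
              (by simp only [hsdef]; push_cast; omega)
          have h2 : lam ^ (i:ℕ) * B (s - ((i:ℕ)+1)) ≤ B (s-1) := by
            have h3 := hiter (i:ℕ) (s - ((i:ℕ)+1))
            have he : s - ((i:ℕ)+1) + (i:ℕ) = s - 1 := by push_cast; ring
            rwa [he] at h3
          rw [le_div_iff₀ (pow_pos hlam0 _)]
          calc z (s - ((i:ℕ)+1)) * lam ^ (i:ℕ)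
              ≤ B (s - ((i:ℕ)+1)) * lam ^ (i:ℕ) :=
                mul_le_mul_of_nonneg_right h1 (pow_nonneg hlam0.le _)
            _ = lam ^ (i:ℕ) * B (s - ((i:ℕ)+1)) := by ring
            _ ≤ B (s-1) := h2
        have hsum : (∑ i : Fin p, χ i * z (s - ((i:ℕ)+1))) ≤ lam * B (s-1) := by
          calc (∑ i : Fin p, χ i * z (s - ((i:ℕ)+1)))
              ≤ ∑ i : Fin p, χ i * (B (s-1) / lam ^ (i:ℕ)) := by
                apply Finset.sum_le_sum
                intro i _
                exact mul_le_mul_of_nonneg_left (hBi i) (hχ0 i)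
            _ = (∑ i : Fin p, χ i / lam ^ (i:ℕ)) * B (s-1) := by
                rw [Finset.sum_mul]
                apply Finset.sum_congr rfl
                intro i _
                ring
            _ ≤ lam * B (s-1) := mul_le_mul_of_nonneg_right hkey (hB0 _)
        have hfin : B s = lam * B (s-1) + μs (n+1) := by
          have hst : s.toNat = n + 1 := by simp [hsdef]
          rw [hBstep s (by simp only [hsdef]; push_cast; omega), hst]
        rw [hts]
        calc z s ≤ (∑ i : Fin p, χ i * z (s - ((i:ℕ)+1))) + μs (n+1) :=
              hrec (n+1) (by omega)
          _ ≤ lam * B (s-1) + μs (n+1) := by linarith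
          _ = B s := hfin.symm
  intro s hs
  have h := main s (s:ℤ) (by omega) (le_refl _)
  rw [one_mul]
  calc z (s:ℤ) ≤ B (s:ℤ) := h
    _ = lam ^ s * A + ∑ i ∈ range s, lam ^ i * μs (s-i) := by
        simp [hB, hM, zpow_natCast]
end

section
/- Suppose Assumption (S1) holds with q = 1 and some 0 < α ≤ 1. Then (1/n) Σ_{t=1}^n X_{t,n} converges in L^1 to ∫_0^1 E X̃_0(u) du as n → ∞. (By (S1), u ↦ E X̃_0(u) is Hölder continuous, so the integral is well defined.) -/
/-!
For each fixed `u` the process `X̃(u)` obeys the mean ergodic theorem in `L¹`: von Neumann's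
theorem for the Koopman operator of the shift gives it in `L²`, and density of simple functions
in `L¹`, together with the fact that Birkhoff averages are `L¹`-contractions, extends it to `L¹`.
Cutting `{1, …, n}` into `K` blocks of length about `n / K` and freezing the time parameter `t / n`
at the right endpoint of its block costs at most the `L¹`-Hölder modulus of `u ↦ X̃(u)` at scale
`1 / K`; the frozen block averages are differences of two ergodic averages of a single stationary
process, so they vanish as `n → ∞` for each fixed `K`. The remaining errors are the approximation
of `X_{t,n}` by `X̃_t(t/n)`, of order `n^{-α}`, and a Riemann sum of the continuous function
`u ↦ E X̃_0(u)`.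
-/

open MeasureTheory Filter Set

noncomputable section

/-- The two-sided shift on `ℤ → ℝ`. -/
def shiftZ : (ℤ → ℝ) → (ℤ → ℝ) := fun x t => x (t + 1)

/-- A real-valued process `(X_t)_{t ∈ ℤ}` is stationary and ergodic: the law of the path
on `ℝ^ℤ` is shift invariant and the shift is ergodic for it. -/
def StatErg {Ω : Type*} [MeasurableSpace Ω] (μ : Measure Ω) (X : ℤ → Ω → ℝ) : Prop :=
  Ergodic shiftZ (Measure.map (fun ω t => X t ω) μ)

open scoped ENNReal Topology

lemma Finset.sum_Icc_one_eq_sum_range {M : Type*} [AddCommMonoid M] (f : ℕ → M) (N : ℕ) :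
    ∑ t ∈ Finset.Icc 1 N, f t = ∑ k ∈ Finset.range N, f (k + 1) := by
  rw [Finset.range_eq_Ico, Finset.sum_Ico_add' f 0 N 1]
  rfl

lemma Finset.sum_range_sum_Ioc {M : Type*} [AddCommMonoid M] (f : ℕ → M) {a : ℕ → ℕ}
    (ha : Monotone a) (K : ℕ) :
    ∑ j ∈ Finset.range K, ∑ t ∈ Finset.Ioc (a j) (a (j + 1)), f t
      = ∑ t ∈ Finset.Ioc (a 0) (a K), f t := by
  induction K with
  | zero => simp
  | succ K ih =>
    rw [Finset.sum_range_succ, ih, Finset.sum_Ioc_consecutive _ (ha K.zero_le) (ha K.le_succ)]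

lemma div_mem_Ioc_of_mem_Ioc_mul_div {n K j t : ℕ} (hn : 0 < n) (hK : 0 < K)
    (ht : t ∈ Finset.Ioc (n * j / K) (n * (j + 1) / K)) :
    (t : ℝ) / n ∈ Ioc ((j : ℝ) / K) ((j + 1) / K) := by
  rw [Finset.mem_Ioc, Nat.div_lt_iff_lt_mul hK, Nat.le_div_iff_mul_le hK] at ht
  have hnR : (0 : ℝ) < n := by exact_mod_cast hn
  have hKR : (0 : ℝ) < K := by exact_mod_cast hK
  have h1 : (n : ℝ) * j < t * K := by exact_mod_cast ht.1
  have h2 : (t : ℝ) * K ≤ n * (j + 1) := by exact_mod_cast ht.2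
  rw [mem_Ioc, div_lt_div_iff₀ hKR hnR, div_le_div_iff₀ hnR hKR]
  exact ⟨by linarith, by linarith⟩

lemma Filter.Tendsto.comp_mul_div {X : Type*} [TopologicalSpace X] {F : ℕ → X} {x : X}
    (hF : Tendsto F atTop (𝓝 x)) (hF0 : F 0 = x) (i : ℕ) {K : ℕ} (hK : 0 < K) :
    Tendsto (fun n => F (n * i / K)) atTop (𝓝 x) := by
  rcases Nat.eq_zero_or_pos i with rfl | hi
  · simpa [hF0] using tendsto_const_nhds
  refine hF.comp (tendsto_atTop.2 fun C => ?_)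
  filter_upwards [eventually_ge_atTop (C * K)] with n hn
  exact (Nat.le_div_iff_mul_le hK).2 (hn.trans (Nat.le_mul_of_pos_right n hi))

lemma birkhoffAverage_eq_smul_sum {α E : Type*} [AddCommMonoid E] [Module ℝ E] (T : α → α)
    (g : α → E) (N : ℕ) :
    birkhoffAverage ℝ T g N = (N : ℝ)⁻¹ • ∑ k ∈ Finset.range N, g ∘ T^[k] := by
  ext x
  simp [birkhoffAverage, birkhoffSum]

lemma exists_pos_ofReal_mul_rpow_le (C : ℝ) {r : ℝ} (hr : 0 < r) {ε : ℝ≥0∞} (hε : 0 < ε) :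
    ∃ δ > 0, ∀ x : ℝ, |x| < δ → ENNReal.ofReal (C * |x| ^ r) ≤ ε := by
  have hcont : Continuous fun x : ℝ => C * |x| ^ r :=
    continuous_const.mul (continuous_abs.rpow_const fun _ => Or.inr hr.le)
  have hlim : Tendsto (fun x : ℝ => ENNReal.ofReal (C * |x| ^ r)) (𝓝 0) (𝓝 0) := by
    simpa [Real.zero_rpow hr.ne'] using ENNReal.tendsto_ofReal (hcont.tendsto 0)
  obtain ⟨δ, hδ, hball⟩ := Metric.eventually_nhds_iff.1 (ENNReal.tendsto_nhds_zero.1 hlim ε hε)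
  exact ⟨δ, hδ, fun x hx => hball (by rwa [Real.dist_eq, sub_zero])⟩

lemma continuousOn_of_enorm_sub_le_rpow {m : ℝ → ℝ} {s : Set ℝ} {C r : ℝ} (hr : 0 < r)
    (hm : ∀ u ∈ s, ∀ v ∈ s, ‖m u - m v‖ₑ ≤ ENNReal.ofReal (C * |u - v| ^ r)) :
    ContinuousOn m s := Metric.continuousOn_iff.2 fun v hv ε hε => by
  obtain ⟨δ, hδ, hCδ⟩ := exists_pos_ofReal_mul_rpow_le C hr (ENNReal.ofReal_pos.2 (half_pos hε))
  refine ⟨δ, hδ, fun u hu huv => ?_⟩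
  have h := (hm u hu v hv).trans (hCδ _ (by rwa [← Real.dist_eq]))
  rw [Real.enorm_eq_ofReal_abs, ENNReal.ofReal_le_ofReal_iff (half_pos hε).le,
    ← Real.dist_eq] at h
  linarith

lemma abs_intervalIntegral_sub_mul_le {m : ℝ → ℝ} {a b η : ℝ} (hab : a ≤ b)
    (hm : ContinuousOn m (Icc a b)) (hη : ∀ x ∈ Icc a b, |m x - m b| ≤ η) :
    |(∫ x in a..b, m x) - (b - a) * m b| ≤ η * (b - a) := by
  have hint : IntervalIntegrable m volume a b :=
    (hm.mono (by rw [uIcc_of_le hab])).intervalIntegrable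
  have hconst : (b - a) * m b = ∫ _ in a..b, m b := by simp
  have hbound := intervalIntegral.norm_integral_le_of_norm_le_const (C := η)
    (f := fun x => m x - m b) fun x hx => by
      rw [uIoc_of_le hab] at hx
      exact (Real.norm_eq_abs _).trans_le (hη x (Ioc_subset_Icc_self hx))
  rwa [Real.norm_eq_abs, abs_of_nonneg (sub_nonneg.2 hab),
    intervalIntegral.integral_sub hint intervalIntegrable_const, ← hconst] at hbound

lemma abs_riemannSum_sub_integral_le {m : ℝ → ℝ} (hm : ContinuousOn m (Icc 0 1)) {n : ℕ}
    (hn : 0 < n) {η : ℝ}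
    (hmη : ∀ x ∈ Icc (0 : ℝ) 1, ∀ y ∈ Icc (0 : ℝ) 1, |x - y| ≤ (n : ℝ)⁻¹ → |m x - m y| ≤ η) :
    |(n : ℝ)⁻¹ * ∑ t ∈ Finset.Icc 1 n, m (t / n) - ∫ u in Icc (0 : ℝ) 1, m u| ≤ η := by
  have hnR : (0 : ℝ) < n := by exact_mod_cast hn
  set a : ℕ → ℝ := fun t => t / n
  have hstep : ∀ t, a (t + 1) - a t = (n : ℝ)⁻¹ := fun t => by
    simp only [a]; push_cast; field_simp; ring
  have hle : ∀ t, a t ≤ a (t + 1) := fun t => by linarith [hstep t, inv_pos.2 hnR]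
  have hsub : ∀ t < n, Icc (a t) (a (t + 1)) ⊆ Icc 0 1 := fun t ht =>
    Icc_subset_Icc (by positivity) ((div_le_one hnR).2 (by exact_mod_cast ht))
  have hpiece : ∀ t < n, |(∫ u in a t..a (t + 1), m u) - (n : ℝ)⁻¹ * m (a (t + 1))|
      ≤ η * (n : ℝ)⁻¹ := by
    intro t ht
    rw [← hstep t]
    refine abs_intervalIntegral_sub_mul_le (hle t) (hm.mono (hsub t ht)) fun x hx =>
      hmη x (hsub t ht hx) _ (hsub t ht (right_mem_Icc.2 (hle t))) ?_
    rw [abs_le]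
    constructor <;> linarith [hx.1, hx.2, hstep t]
  have hintegral : ∫ u in Icc (0 : ℝ) 1, m u
      = ∑ t ∈ Finset.range n, ∫ u in a t..a (t + 1), m u := by
    rw [intervalIntegral.sum_integral_adjacent_intervals fun t ht =>
      (hm.mono ((uIcc_of_le (hle t)).trans_subset (hsub t ht))).intervalIntegrable]
    simp [a, hnR.ne', intervalIntegral.integral_of_le, integral_Icc_eq_integral_Ioc]
  have hsum : (n : ℝ)⁻¹ * ∑ t ∈ Finset.Icc 1 n, m (t / n)
      = ∑ t ∈ Finset.range n, (n : ℝ)⁻¹ * m (a (t + 1)) := by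
    rw [Finset.mul_sum, Finset.sum_Icc_one_eq_sum_range]
  rw [hsum, hintegral, abs_sub_comm, ← Finset.sum_sub_distrib]
  calc |∑ t ∈ Finset.range n, ((∫ u in a t..a (t + 1), m u) - (n : ℝ)⁻¹ * m (a (t + 1)))|
      ≤ ∑ t ∈ Finset.range n, |(∫ u in a t..a (t + 1), m u) - (n : ℝ)⁻¹ * m (a (t + 1))| :=
        Finset.abs_sum_le_sum_abs _ _
    _ ≤ ∑ _t ∈ Finset.range n, η * (n : ℝ)⁻¹ :=
        Finset.sum_le_sum fun t ht => hpiece t (Finset.mem_range.1 ht)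
    _ = η := by rw [Finset.sum_const, Finset.card_range, nsmul_eq_mul]; field_simp

theorem ContinuousOn.tendsto_riemannSum {m : ℝ → ℝ} (hm : ContinuousOn m (Icc 0 1)) :
    Tendsto (fun n : ℕ => (n : ℝ)⁻¹ * ∑ t ∈ Finset.Icc 1 n, m (t / n)) atTop
      (𝓝 (∫ u in Icc (0 : ℝ) 1, m u)) := by
  rw [Metric.tendsto_atTop]
  intro ε hε
  obtain ⟨δ, hδ, hmδ⟩ := Metric.uniformContinuousOn_iff_le.1
    (isCompact_Icc.uniformContinuousOn_of_continuous hm) (ε / 2) (half_pos hε)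
  obtain ⟨N, hN⟩ := exists_nat_one_div_lt hδ
  refine ⟨N + 1, fun n hn => ?_⟩
  have hmesh : (n : ℝ)⁻¹ ≤ δ := by
    refine le_trans ?_ hN.le
    rw [one_div]
    exact inv_anti₀ (by positivity) (by exact_mod_cast hn)
  refine (abs_riemannSum_sub_integral_le hm (N.succ_pos.trans_le hn)
    fun x hx y hy hxy => ?_).trans_lt (half_lt_self hε)
  simpa only [Real.dist_eq] using hmδ x hx y hy (by rw [Real.dist_eq]; exact hxy.trans hmesh)

namespace MeasureTheory

section

variable {α E : Type*} [MeasurableSpace α] {μ : Measure α} [NormedAddCommGroup E] {p : ℝ≥0∞}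

lemma eLpNorm_add_add_le (hp : 1 ≤ p) {f g h : α → E} (hf : AEStronglyMeasurable f μ)
    (hg : AEStronglyMeasurable g μ) (hh : AEStronglyMeasurable h μ) :
    eLpNorm (f + g + h) p μ ≤ eLpNorm f p μ + eLpNorm g p μ + eLpNorm h p μ :=
  (eLpNorm_add_le (hf.add hg) hh hp).trans (add_le_add_left (eLpNorm_add_le hf hg hp) _)

lemma eLpNorm_const_eq_enorm [IsProbabilityMeasure μ] (hp : p ≠ 0) (c : E) :
    eLpNorm (fun _ : α => c) p μ = ‖c‖ₑ := by
  simp [eLpNorm_const c hp (IsProbabilityMeasure.ne_zero μ)]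

variable [NormedSpace ℝ E]

lemma enorm_integral_le_eLpNorm_one (f : α → E) : ‖∫ x, f x ∂μ‖ₑ ≤ eLpNorm f 1 μ :=
  eLpNorm_one_eq_lintegral_enorm (f := f) ▸ enorm_integral_le_lintegral_enorm f

lemma enorm_integral_sub_integral_le {f g : α → E} (hf : Integrable f μ) (hg : Integrable g μ) :
    ‖∫ x, f x ∂μ - ∫ x, g x ∂μ‖ₑ ≤ eLpNorm (fun x => f x - g x) 1 μ := by
  rw [← integral_sub hf hg]
  exact enorm_integral_le_eLpNorm_one _

lemma eLpNorm_inv_smul_sum_le (hp : 1 ≤ p) {ι : Type*} {s : Finset ι} {f : ι → α → E}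
    (hf : ∀ i ∈ s, AEStronglyMeasurable (f i) μ) {c : ℝ≥0∞}
    (hc : ∀ i ∈ s, eLpNorm (f i) p μ ≤ c) (n : ℕ) :
    eLpNorm ((n : ℝ)⁻¹ • ∑ i ∈ s, f i) p μ ≤ (n : ℝ≥0∞)⁻¹ * s.card * c := by
  have hinv : ‖(n : ℝ)⁻¹‖ₑ ≤ (n : ℝ≥0∞)⁻¹ := by
    rcases eq_or_ne n 0 with rfl | hn
    · simp
    · rw [enorm_inv (by exact_mod_cast hn), Real.enorm_natCast]
  calc eLpNorm ((n : ℝ)⁻¹ • ∑ i ∈ s, f i) p μ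
      = ‖(n : ℝ)⁻¹‖ₑ * eLpNorm (∑ i ∈ s, f i) p μ := eLpNorm_const_smul _ _ _ _
    _ ≤ (n : ℝ≥0∞)⁻¹ * ∑ i ∈ s, eLpNorm (f i) p μ := by
        gcongr
        exact eLpNorm_sum_le hf hp
    _ ≤ (n : ℝ≥0∞)⁻¹ * s.card * c := by
        rw [mul_assoc]
        gcongr
        simpa using Finset.sum_le_card_nsmul s _ c hc

lemma eLpNorm_inv_mul_sum_sub_le [IsProbabilityMeasure μ] (hp : 1 ≤ p) {ι : Type*}
    (s : Finset ι) {f g : ι → α → ℝ} (hf : ∀ i, AEStronglyMeasurable (f i) μ)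
    (hg : ∀ i, AEStronglyMeasurable (g i) μ) (c : ι → ℝ) (a I : ℝ) :
    eLpNorm (fun x => a * ∑ i ∈ s, f i x - I) p μ
      ≤ eLpNorm (a • ∑ i ∈ s, fun x => f i x - g i x) p μ
        + eLpNorm (a • ∑ i ∈ s, fun x => g i x - c i) p μ + ‖a * ∑ i ∈ s, c i - I‖ₑ := by
  have hsplit : (fun x => a * ∑ i ∈ s, f i x - I)
      = (a • ∑ i ∈ s, fun x => f i x - g i x) + (a • ∑ i ∈ s, fun x => g i x - c i)
        + fun _ => a * ∑ i ∈ s, c i - I := by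
    ext x
    simp only [Pi.add_apply, Pi.smul_apply, Finset.sum_apply, smul_eq_mul, Finset.sum_sub_distrib]
    ring
  rw [hsplit, ← eLpNorm_const_eq_enorm (μ := μ) (zero_lt_one.trans_le hp).ne']
  exact eLpNorm_add_add_le hp
    ((Finset.aestronglyMeasurable_sum _ fun i _ => (hf i).sub (hg i)).const_smul _)
    ((Finset.aestronglyMeasurable_sum _ fun i _ =>
      (hg i).sub aestronglyMeasurable_const).const_smul _)
    aestronglyMeasurable_const

lemma tendsto_eLpNorm_inv_smul_sum_Icc_of_le (hp : 1 ≤ p) {f : ℕ → ℕ → α → E}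
    (hf : ∀ n t, AEStronglyMeasurable (f n t) μ) {b : ℕ → ℝ≥0∞} (hb : Tendsto b atTop (𝓝 0))
    (hfb : ∀ n, ∀ t ∈ Finset.Icc 1 n, eLpNorm (f n t) p μ ≤ b n) :
    Tendsto (fun n : ℕ => eLpNorm ((n : ℝ)⁻¹ • ∑ t ∈ Finset.Icc 1 n, f n t) p μ) atTop (𝓝 0) := by
  refine tendsto_of_tendsto_of_tendsto_of_le_of_le tendsto_const_nhds hb (fun _ => zero_le)
    fun n => (eLpNorm_inv_smul_sum_le hp (fun t _ => hf n t) (hfb n) n).trans ?_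
  rw [Nat.card_Icc, Nat.add_sub_cancel, ← ENNReal.div_eq_inv_mul]
  exact mul_le_of_le_one_left' ENNReal.div_self_le_one

lemma eLpNorm_inv_smul_sum_Icc_mono (f : ℕ → α → E) {c n : ℕ} (hcn : c ≤ n) :
    eLpNorm ((n : ℝ)⁻¹ • ∑ t ∈ Finset.Icc 1 c, f t) p μ
      ≤ eLpNorm ((c : ℝ)⁻¹ • ∑ t ∈ Finset.Icc 1 c, f t) p μ := by
  rcases Nat.eq_zero_or_pos c with rfl | hc
  · simp
  rw [eLpNorm_const_smul, eLpNorm_const_smul]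
  gcongr
  rw [enorm_inv (by exact_mod_cast (hc.trans_le hcn).ne'), enorm_inv (by exact_mod_cast hc.ne'),
    Real.enorm_natCast, Real.enorm_natCast]
  exact ENNReal.inv_le_inv.2 (by exact_mod_cast hcn)

lemma eLpNorm_inv_smul_sum_Ioc_le (hp : 1 ≤ p) {f : ℕ → α → E}
    (hf : ∀ t, AEStronglyMeasurable (f t) μ) {a b n : ℕ} (hab : a ≤ b) (hbn : b ≤ n) :
    eLpNorm ((n : ℝ)⁻¹ • ∑ t ∈ Finset.Ioc a b, f t) p μ
      ≤ eLpNorm ((a : ℝ)⁻¹ • ∑ t ∈ Finset.Icc 1 a, f t) p μ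
        + eLpNorm ((b : ℝ)⁻¹ • ∑ t ∈ Finset.Icc 1 b, f t) p μ := by
  have hsplit : ∑ t ∈ Finset.Ioc a b, f t
      = ∑ t ∈ Finset.Icc 1 b, f t - ∑ t ∈ Finset.Icc 1 a, f t := by
    have hIcc : ∀ c, Finset.Icc 1 c = Finset.Ioc 0 c := Finset.Icc_add_one_left_eq_Ioc 0
    rw [hIcc, hIcc, ← Finset.sum_Ioc_consecutive f a.zero_le hab, add_sub_cancel_left]
  have hm : ∀ s : Finset ℕ, AEStronglyMeasurable ((n : ℝ)⁻¹ • ∑ t ∈ s, f t) μ :=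
    fun s => (Finset.aestronglyMeasurable_sum s fun t _ => hf t).const_smul _
  rw [hsplit, smul_sub, add_comm]
  exact (eLpNorm_sub_le (hm _) (hm _) hp).trans (add_le_add
    (eLpNorm_inv_smul_sum_Icc_mono f hbn) (eLpNorm_inv_smul_sum_Icc_mono f (hab.trans hbn)))

lemma eLpNorm_inv_smul_sum_Ioc_le_of_approx (hp : 1 ≤ p) {f g : ℕ → α → E}
    (hf : ∀ t, AEStronglyMeasurable (f t) μ) (hg : ∀ t, AEStronglyMeasurable (g t) μ)
    {a b n : ℕ} (hab : a ≤ b) (hbn : b ≤ n) {η : ℝ≥0∞}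
    (hfg : ∀ t ∈ Finset.Ioc a b, eLpNorm (f t - g t) p μ ≤ η) :
    eLpNorm ((n : ℝ)⁻¹ • ∑ t ∈ Finset.Ioc a b, f t) p μ
      ≤ (n : ℝ≥0∞)⁻¹ * (Finset.Ioc a b).card * η
        + (eLpNorm ((a : ℝ)⁻¹ • ∑ t ∈ Finset.Icc 1 a, g t) p μ
          + eLpNorm ((b : ℝ)⁻¹ • ∑ t ∈ Finset.Icc 1 b, g t) p μ) := by
  have hsplit : (n : ℝ)⁻¹ • ∑ t ∈ Finset.Ioc a b, f t
      = (n : ℝ)⁻¹ • ∑ t ∈ Finset.Ioc a b, (f t - g t)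
        + (n : ℝ)⁻¹ • ∑ t ∈ Finset.Ioc a b, g t := by
    rw [← smul_add, ← Finset.sum_add_distrib]
    simp
  rw [hsplit]
  refine (eLpNorm_add_le ?_ ?_ hp).trans (add_le_add
    (eLpNorm_inv_smul_sum_le hp (fun t _ => (hf t).sub (hg t)) hfg n)
    (eLpNorm_inv_smul_sum_Ioc_le hp hg hab hbn))
  · exact (Finset.aestronglyMeasurable_sum _ fun t _ => (hf t).sub (hg t)).const_smul _
  · exact (Finset.aestronglyMeasurable_sum _ fun t _ => hg t).const_smul _

lemma eLpNorm_inv_smul_sum_Icc_le_of_blocks (hp : 1 ≤ p) {f : ℕ → α → E}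
    (hf : ∀ t, AEStronglyMeasurable (f t) μ) {n K : ℕ} (hn : n ≠ 0) {a : ℕ → ℕ}
    (ha : Monotone a) (ha0 : a 0 = 0) (haK : a K = n) {η : ℝ≥0∞} {r : ℕ → ℝ≥0∞}
    (hblock : ∀ j < K, eLpNorm ((n : ℝ)⁻¹ • ∑ t ∈ Finset.Ioc (a j) (a (j + 1)), f t) p μ
      ≤ (n : ℝ≥0∞)⁻¹ * (Finset.Ioc (a j) (a (j + 1))).card * η + r j) :
    eLpNorm ((n : ℝ)⁻¹ • ∑ t ∈ Finset.Icc 1 n, f t) p μ ≤ η + ∑ j ∈ Finset.range K, r j := by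
  have hcard : ∑ j ∈ Finset.range K, (Finset.Ioc (a j) (a (j + 1))).card = n := by
    simp only [Nat.card_Ioc]
    rw [Finset.sum_range_tsub ha, haK, ha0, Nat.sub_zero]
  calc eLpNorm ((n : ℝ)⁻¹ • ∑ t ∈ Finset.Icc 1 n, f t) p μ
      = eLpNorm (∑ j ∈ Finset.range K,
          (n : ℝ)⁻¹ • ∑ t ∈ Finset.Ioc (a j) (a (j + 1)), f t) p μ := by
        rw [← Finset.smul_sum, Finset.sum_range_sum_Ioc _ ha, ha0, haK,
          ← Finset.Icc_add_one_left_eq_Ioc, zero_add]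
    _ ≤ ∑ j ∈ Finset.range K,
          eLpNorm ((n : ℝ)⁻¹ • ∑ t ∈ Finset.Ioc (a j) (a (j + 1)), f t) p μ :=
        eLpNorm_sum_le (fun j _ =>
          (Finset.aestronglyMeasurable_sum _ fun t _ => hf t).const_smul _) hp
    _ ≤ ∑ j ∈ Finset.range K,
          ((n : ℝ≥0∞)⁻¹ * (Finset.Ioc (a j) (a (j + 1))).card * η + r j) :=
        Finset.sum_le_sum fun j hj => hblock j (Finset.mem_range.1 hj)
    _ ≤ η + ∑ j ∈ Finset.range K, r j := by
        rw [Finset.sum_add_distrib, ← Finset.sum_mul, ← Finset.mul_sum, ← Nat.cast_sum, hcard,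
          ENNReal.inv_mul_cancel (by exact_mod_cast hn) (ENNReal.natCast_ne_top n), one_mul]

theorem tendsto_eLpNorm_inv_smul_sum_rescaled (hp : 1 ≤ p) {Z : ℝ → ℕ → α → E}
    (hZm : ∀ u t, AEStronglyMeasurable (Z u t) μ)
    (hZerg : ∀ u ∈ Icc (0 : ℝ) 1,
      Tendsto (fun N : ℕ => eLpNorm ((N : ℝ)⁻¹ • ∑ t ∈ Finset.Icc 1 N, Z u t) p μ) atTop (𝓝 0))
    (hZcont : ∀ ε > 0, ∃ δ > 0, ∀ u ∈ Icc (0 : ℝ) 1, ∀ v ∈ Icc (0 : ℝ) 1, |u - v| < δ →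
      ∀ t, eLpNorm (Z u t - Z v t) p μ ≤ ε) :
    Tendsto (fun n : ℕ => eLpNorm ((n : ℝ)⁻¹ • ∑ t ∈ Finset.Icc 1 n, Z (t / n) t) p μ)
      atTop (𝓝 0) := by
  set avg : ℝ → ℕ → ℝ≥0∞ := fun u N => eLpNorm ((N : ℝ)⁻¹ • ∑ t ∈ Finset.Icc 1 N, Z u t) p μ
  rw [ENNReal.tendsto_nhds_zero]
  intro ε hε
  obtain ⟨δ, hδ, hZδ⟩ := hZcont (ε / 2) (ENNReal.half_pos hε.ne')
  obtain ⟨k, hk⟩ := exists_nat_one_div_lt hδ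
  set K := k + 1
  have hK : 0 < K := k.succ_pos
  have hKR : (0 : ℝ) < K := by exact_mod_cast hK
  have hKδ : 1 / (K : ℝ) < δ := by simpa [K] using hk
  -- block `j` of `{1, …, n}` is `(A n j, A n (j + 1)]`; on it `t / n` is within `1 / K` of `U j`
  set A : ℕ → ℕ → ℕ := fun n j => n * j / K
  set U : ℕ → ℝ := fun j => (j + 1) / K
  have hA_mono : ∀ n, Monotone (A n) := fun n _ _ hij =>
    Nat.div_le_div_right (Nat.mul_le_mul_left n hij)
  have hAK : ∀ n, A n K = n := fun n => Nat.mul_div_cancel n hK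
  have hU : ∀ j < K, U j ∈ Icc (0 : ℝ) 1 := fun j hj =>
    ⟨by positivity, (div_le_one hKR).2 (by exact_mod_cast hj)⟩
  have hclose : ∀ j < K, ∀ n > 0, ∀ t ∈ Finset.Ioc (A n j) (A n (j + 1)),
      eLpNorm (Z (t / n) t - Z (U j) t) p μ ≤ ε / 2 := by
    intro j hj n hn t ht
    obtain ⟨hlo, hhi⟩ := div_mem_Ioc_of_mem_Ioc_mul_div hn hK ht
    refine hZδ _ ⟨by positivity, hhi.trans (hU j hj).2⟩ _ (hU j hj) ?_ t
    have hUj : U j - (j : ℝ) / K = 1 / K := by simp only [U]; ring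
    rw [abs_lt]
    constructor <;> linarith
  have havg : ∀ j < K, ∀ i, Tendsto (fun n => avg (U j) (A n i)) atTop (𝓝 0) := fun j hj i =>
    (hZerg _ (hU j hj)).comp_mul_div (by simp) i hK
  have hrem : Tendsto (fun n => ∑ j ∈ Finset.range K,
      (avg (U j) (A n j) + avg (U j) (A n (j + 1)))) atTop (𝓝 0) := by
    simpa using tendsto_finsetSum _ fun j hj =>
      (havg j (Finset.mem_range.1 hj) j).add (havg j (Finset.mem_range.1 hj) (j + 1))
  filter_upwards [ENNReal.tendsto_nhds_zero.mp hrem (ε / 2) (ENNReal.half_pos hε.ne'),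
    eventually_gt_atTop 0] with n hrem_n hn
  refine (eLpNorm_inv_smul_sum_Icc_le_of_blocks hp (fun t => hZm _ t) hn.ne' (hA_mono n)
    (by simp [A]) (hAK n) fun j hj => eLpNorm_inv_smul_sum_Ioc_le_of_approx hp
      (fun t => hZm _ t) (hZm (U j)) (hA_mono n j.le_succ) ((hA_mono n hj).trans_eq (hAK n))
      (hclose j hj n hn)).trans ?_
  exact (add_le_add le_rfl hrem_n).trans_eq (ENNReal.add_halves ε)

end

section

variable {α : Type*} [MeasurableSpace α] {μ : Measure α} {T : α → α}

def koopman (p : ℝ≥0∞) [Fact (1 ≤ p)] (hT : MeasurePreserving T μ μ) :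
    Lp ℝ p μ →L[ℝ] Lp ℝ p μ :=
  (Lp.compMeasurePreservingₗᵢ ℝ T hT).toContinuousLinearMap

lemma norm_koopman_le {p : ℝ≥0∞} [Fact (1 ≤ p)] (hT : MeasurePreserving T μ μ) :
    ‖koopman p hT‖ ≤ 1 :=
  LinearIsometry.norm_toContinuousLinearMap_le _

lemma coeFn_birkhoffAverage_koopman {p : ℝ≥0∞} [Fact (1 ≤ p)] (hT : MeasurePreserving T μ μ)
    (G : Lp ℝ p μ) (N : ℕ) :
    ⇑(birkhoffAverage ℝ (koopman p hT) id N G) =ᵐ[μ] birkhoffAverage ℝ T G N := by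
  have hiter : ∀ᵐ x ∂μ, ∀ k, (koopman p hT)^[k] G x = G (T^[k] x) := by
    refine ae_all_iff.2 fun k => ?_
    have : (koopman p hT)^[k] G = Lp.compMeasurePreserving T^[k] (hT.iterate k) G := by
      rw [← Lp.compMeasurePreserving_iterate]
      rfl
    rw [this]
    exact Lp.coeFn_compMeasurePreserving G (hT.iterate k)
  filter_upwards [Lp.coeFn_smul (N : ℝ)⁻¹ (∑ k ∈ Finset.range N, (koopman p hT)^[k] G),
    Lp.coeFn_fun_finsetSum (Finset.range N) (fun k => (koopman p hT)^[k] G), hiter]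
    with x hsmul hsum hx
  simp only [birkhoffAverage, birkhoffSum, id, hsmul, Pi.smul_apply, hsum, hx]

lemma L2.inner_const_left [IsFiniteMeasure μ] (c : ℝ) (f : Lp ℝ 2 μ) :
    inner ℝ (Lp.const 2 μ c) f = c * ∫ x, f x ∂μ := by
  rw [← indicatorConstLp_univ, L2.inner_indicatorConstLp_eq_inner_setIntegral,
    Measure.restrict_univ, real_inner_eq_re_inner, RCLike.inner_apply, conj_trivial,
    RCLike.re_to_real, mul_comm]

lemma Ergodic.starProjection_eqLocus_koopman [IsProbabilityMeasure μ] (hT : Ergodic T μ)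
    (G : Lp ℝ 2 μ) :
    ((koopman 2 hT.toMeasurePreserving).eqLocus (1 : Lp ℝ 2 μ →L[ℝ] Lp ℝ 2 μ)).starProjection G
      = Lp.const 2 μ (∫ x, G x ∂μ) := by
  refine Submodule.eq_starProjection_of_mem_of_inner_eq_zero rfl fun w hw => ?_
  obtain ⟨d, hd⟩ := hT.eq_const_of_compMeasurePreserving_eq (congrArg Subtype.val hw)
  have hw_const : w = Lp.const 2 μ d := Subtype.ext hd
  have hint : ∀ f : Lp ℝ 2 μ, Integrable f μ := fun f => (Lp.memLp f).integrable one_le_two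
  rw [hw_const, real_inner_comm, L2.inner_const_left, integral_congr_ae (Lp.coeFn_sub _ _),
    Pi.sub_def, integral_sub (hint G) (hint _), integral_congr_ae (Lp.coeFn_const _ _ _)]
  simp

theorem Ergodic.tendsto_eLpNorm_birkhoffAverage_sub_integral_two [IsProbabilityMeasure μ]
    (hT : Ergodic T μ) {g : α → ℝ} (hg : MemLp g 2 μ) :
    Tendsto (fun N => eLpNorm (birkhoffAverage ℝ T g N - fun _ => ∫ x, g x ∂μ) 2 μ)
      atTop (𝓝 0) := by
  set G := hg.toLp g
  have hlim := ContinuousLinearMap.tendsto_birkhoffAverage_orthogonalProjection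
    (koopman 2 hT.toMeasurePreserving) (norm_koopman_le _) G
  rw [Submodule.coe_orthogonalProjectionOnto_apply, hT.starProjection_eqLocus_koopman,
    integral_congr_ae hg.coeFn_toLp, Lp.tendsto_Lp_iff_tendsto_eLpNorm'] at hlim
  refine hlim.congr fun N => eLpNorm_congr_ae ?_
  have hA := (coeFn_birkhoffAverage_koopman hT.toMeasurePreserving G N).trans
    (hT.quasiMeasurePreserving.birkhoffAverage_ae_eq_of_ae_eq ℝ hg.coeFn_toLp N)
  filter_upwards [hA, Lp.coeFn_const 2 μ (∫ x, g x ∂μ)] with x hAx hcx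
  simp [hAx]

variable {E : Type*} [NormedAddCommGroup E] [NormedSpace ℝ E] {p : ℝ≥0∞}

lemma MeasurePreserving.aestronglyMeasurable_birkhoffAverage (hT : MeasurePreserving T μ μ)
    {g : α → E} (hg : AEStronglyMeasurable g μ) (N : ℕ) :
    AEStronglyMeasurable (birkhoffAverage ℝ T g N) μ := by
  rw [birkhoffAverage_eq_smul_sum]
  exact (Finset.aestronglyMeasurable_sum _
    fun k _ => hg.comp_measurePreserving (hT.iterate k)).const_smul _

lemma MeasurePreserving.eLpNorm_birkhoffAverage_le (hp : 1 ≤ p) (hT : MeasurePreserving T μ μ)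
    {g : α → E} (hg : AEStronglyMeasurable g μ) (N : ℕ) :
    eLpNorm (birkhoffAverage ℝ T g N) p μ ≤ eLpNorm g p μ := by
  rw [birkhoffAverage_eq_smul_sum]
  refine (eLpNorm_inv_smul_sum_le hp (fun k _ => hg.comp_measurePreserving (hT.iterate k))
    (fun k _ => (eLpNorm_comp_measurePreserving hg (hT.iterate k)).le) N).trans ?_
  rw [Finset.card_range, ← ENNReal.div_eq_inv_mul]
  exact mul_le_of_le_one_left' ENNReal.div_self_le_one

theorem Ergodic.tendsto_eLpNorm_birkhoffAverage_sub_integral [IsProbabilityMeasure μ]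
    (hT : Ergodic T μ) (hp1 : 1 ≤ p) (hp2 : p ≤ 2) {g : α → ℝ} (hg : MemLp g p μ) :
    Tendsto (fun N => eLpNorm (birkhoffAverage ℝ T g N - fun _ => ∫ x, g x ∂μ) p μ)
      atTop (𝓝 0) := by
  rw [ENNReal.tendsto_nhds_zero]
  intro ε hε
  have hε3 : ε / 3 ≠ 0 := by simpa using hε.ne'
  obtain ⟨φ, hgh, hh⟩ :=
    hg.exists_simpleFunc_eLpNorm_sub_lt (ne_top_of_le_ne_top ENNReal.ofNat_ne_top hp2) hε3
  set h : α → ℝ := ⇑φ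
  have hh2 : MemLp h 2 μ := (φ.memLp_top μ).mono_exponent le_top
  filter_upwards [ENNReal.tendsto_nhds_zero.mp
    (hT.tendsto_eLpNorm_birkhoffAverage_sub_integral_two hh2) (ε / 3) (pos_iff_ne_zero.2 hε3)]
    with N hN
  have hT' := hT.toMeasurePreserving
  have hgi := hg.integrable hp1
  have hhi := hh.integrable hp1
  have hsplit : birkhoffAverage ℝ T g N - (fun _ => ∫ x, g x ∂μ)
      = birkhoffAverage ℝ T (g - h) N + (birkhoffAverage ℝ T h N - fun _ => ∫ x, h x ∂μ)
        + fun _ => ∫ x, h x ∂μ - ∫ x, g x ∂μ := by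
    ext x
    simp [birkhoffAverage_sub]
  have hconst : ‖∫ x, h x ∂μ - ∫ x, g x ∂μ‖ₑ ≤ eLpNorm (g - h) p μ := calc
    _ ≤ eLpNorm (fun x => h x - g x) 1 μ := enorm_integral_sub_integral_le hhi hgi
    _ ≤ eLpNorm (h - g) p μ := eLpNorm_le_eLpNorm_of_exponent_le hp1 (hhi.1.sub hgi.1)
    _ = eLpNorm (g - h) p μ := eLpNorm_sub_comm _ _ _ _
  rw [hsplit, ← ENNReal.add_thirds ε]
  refine (eLpNorm_add_add_le hp1 (hT'.aestronglyMeasurable_birkhoffAverage (hgi.1.sub hhi.1) N)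
    ((hT'.aestronglyMeasurable_birkhoffAverage hhi.1 N).sub aestronglyMeasurable_const)
    aestronglyMeasurable_const).trans ?_
  gcongr
  · exact (hT'.eLpNorm_birkhoffAverage_le hp1 (hgi.1.sub hhi.1) N).trans hgh.le
  · exact (eLpNorm_le_eLpNorm_of_exponent_le hp2 ((hT'.aestronglyMeasurable_birkhoffAverage
      hhi.1 N).sub aestronglyMeasurable_const)).trans hN
  · rw [eLpNorm_const_eq_enorm (zero_lt_one.trans_le hp1).ne']
    exact hconst.trans hgh.le

end

end MeasureTheory

lemma shiftZ_iterate_apply (k : ℕ) (x : ℤ → ℝ) (s : ℤ) : shiftZ^[k] x s = x (s + k) := by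
  induction k generalizing x with
  | zero => simp
  | succ k ih =>
    rw [Function.iterate_succ_apply, ih]
    simp only [shiftZ, Nat.cast_succ, add_assoc]

theorem StatErg.tendsto_eLpNorm_inv_smul_sum_sub_integral {Ω : Type*} [MeasurableSpace Ω]
    {μ : Measure Ω} [IsProbabilityMeasure μ] {X : ℤ → Ω → ℝ} (hstat : StatErg μ X)
    (hX : ∀ t, Measurable (X t)) (hint : Integrable (X 0) μ) :
    Tendsto (fun N : ℕ => eLpNorm
      ((N : ℝ)⁻¹ • ∑ t ∈ Finset.Icc 1 N, fun ω => X t ω - ∫ ω', X 0 ω' ∂μ) 1 μ)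
      atTop (𝓝 0) := by
  set path : Ω → ℤ → ℝ := fun ω t => X t ω
  have hpath : Measurable path := measurable_pi_lambda _ hX
  set ν := μ.map path
  have : IsProbabilityMeasure ν := Measure.isProbabilityMeasure_map hpath.aemeasurable
  have hT : Ergodic shiftZ ν := hstat
  have hshift : MeasurePreserving shiftZ ν ν := hT.toMeasurePreserving
  set c := ∫ ω, X 0 ω ∂μ
  have hcoord : ∀ s, Measurable fun x : ℤ → ℝ => x s := measurable_pi_apply
  have hint0 : Integrable (fun x : ℤ → ℝ => x 0) ν :=
    (integrable_map_measure (hcoord 0).aestronglyMeasurable hpath.aemeasurable).2 hint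
  have hint1 : Integrable (fun x : ℤ → ℝ => x 1) ν :=
    (hshift.integrable_comp (hcoord 0).aestronglyMeasurable).2 hint0
  have hmean : ∫ x, x 1 ∂ν = c := calc
    ∫ x, x 1 ∂ν = ∫ x, shiftZ x 0 ∂ν := rfl
    _ = ∫ x, x 0 ∂ν := by
      rw [← integral_map hshift.measurable.aemeasurable (hcoord 0).aestronglyMeasurable,
        hshift.map_eq]
    _ = c := integral_map hpath.aemeasurable (hcoord 0).aestronglyMeasurable
  -- observing the coordinate `1` makes the Birkhoff sum run over `t = 1, …, N`
  set g : (ℤ → ℝ) → ℝ := fun x => x 1 - c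
  have hg : MemLp g 1 ν := memLp_one_iff_integrable.2 (hint1.sub (integrable_const c))
  have hg0 : ∫ x, g x ∂ν = 0 := by
    rw [integral_sub hint1 (integrable_const c), hmean, integral_const]
    simp
  have hlim := hT.tendsto_eLpNorm_birkhoffAverage_sub_integral le_rfl one_le_two hg
  simp only [hg0, Pi.sub_def, sub_zero] at hlim
  refine hlim.congr fun N => ?_
  rw [eLpNorm_map_measure (hshift.aestronglyMeasurable_birkhoffAverage hg.1 N) hpath.aemeasurable]
  congr 1
  ext ω
  simp [birkhoffAverage, birkhoffSum, shiftZ_iterate_apply, Finset.sum_Icc_one_eq_sum_range,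
    path, g, add_comm]

theorem tendsto_eLpNorm_inv_smul_sum_sub_integral_rescaled {Ω : Type*} [MeasurableSpace Ω]
    {μ : Measure Ω} [IsProbabilityMeasure μ] {Xt : ℝ → ℤ → Ω → ℝ}
    (hXt : ∀ u t, Measurable (Xt u t)) (hstat : ∀ u ∈ Icc (0 : ℝ) 1, StatErg μ (Xt u))
    (hint : ∀ u ∈ Icc (0 : ℝ) 1, Integrable (Xt u 0) μ) {C r : ℝ} (hr : 0 < r)
    (hholder : ∀ u ∈ Icc (0 : ℝ) 1, ∀ v ∈ Icc (0 : ℝ) 1, ∀ t : ℤ,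
      eLpNorm (fun ω => Xt u t ω - Xt v t ω) 1 μ ≤ ENNReal.ofReal (C * |u - v| ^ r)) :
    Tendsto (fun n : ℕ => eLpNorm ((n : ℝ)⁻¹ • ∑ t ∈ Finset.Icc 1 n,
      fun ω => Xt (t / n) t ω - ∫ ω', Xt (t / n) 0 ω' ∂μ) 1 μ) atTop (𝓝 0) := by
  set m : ℝ → ℝ := fun u => ∫ ω, Xt u 0 ω ∂μ
  refine tendsto_eLpNorm_inv_smul_sum_rescaled le_rfl (Z := fun u t ω => Xt u t ω - m u)
    (fun u t => ((hXt u t).sub measurable_const).aestronglyMeasurable)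
    (fun u hu => (hstat u hu).tendsto_eLpNorm_inv_smul_sum_sub_integral (hXt u) (hint u hu))
    fun ε hε => ?_
  obtain ⟨δ, hδ, hCδ⟩ := exists_pos_ofReal_mul_rpow_le C hr (ENNReal.half_pos hε.ne')
  refine ⟨δ, hδ, fun u hu v hv huv t => ?_⟩
  have hsplit : ((fun ω => Xt u t ω - m u) - fun ω => Xt v t ω - m v)
      = (fun ω => Xt u t ω - Xt v t ω) + fun _ => m v - m u := by
    ext ω
    simp only [Pi.sub_apply, Pi.add_apply]
    ring
  rw [hsplit, ← ENNReal.add_halves ε]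
  refine (eLpNorm_add_le ((hXt u t).sub (hXt v t)).aestronglyMeasurable
    aestronglyMeasurable_const le_rfl).trans (add_le_add ?_ ?_)
  · exact (hholder u hu v hv t).trans (hCδ _ huv)
  · rw [eLpNorm_const_eq_enorm one_ne_zero]
    exact (enorm_integral_sub_integral_le (hint v hv) (hint u hu)).trans
      ((hholder v hv u hu 0).trans (hCδ _ (by rwa [abs_sub_comm])))

theorem lln_global_general {Ω : Type*} [MeasurableSpace Ω] (μ : Measure Ω) [IsProbabilityMeasure μ]
    (X : ℕ → ℕ → Ω → ℝ) (Xt : ℝ → ℤ → Ω → ℝ)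
    (hXmeas : ∀ n t, Measurable (X n t))
    (hXtmeas : ∀ u t, Measurable (Xt u t))
    (hstat : ∀ u ∈ Icc (0:ℝ) 1, StatErg μ (fun t => Xt u t))
    (α : ℝ) (hα : 0 < α) (CB : ℝ)
    -- (S1), with q = 1 :
    (hmom : ∃ M : ℝ, ∀ u ∈ Icc (0:ℝ) 1, eLpNorm (Xt u 0) 1 μ ≤ ENNReal.ofReal M)
    (hhoelder : ∀ u ∈ Icc (0:ℝ) 1, ∀ v ∈ Icc (0:ℝ) 1, ∀ t : ℤ,
      eLpNorm (fun ω => Xt u t ω - Xt v t ω) 1 μ ≤ ENNReal.ofReal (CB * |u - v| ^ α))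
    (happrox : ∀ n : ℕ, 1 ≤ n → ∀ t : ℕ, 1 ≤ t → t ≤ n →
      eLpNorm (fun ω => X n t ω - Xt ((t : ℝ) / (n : ℝ)) (t : ℤ) ω) 1 μ
        ≤ ENNReal.ofReal (CB * (n : ℝ) ^ (-α))) :
    Tendsto (fun n : ℕ =>
        eLpNorm (fun ω => (n : ℝ)⁻¹ * ∑ t ∈ Finset.Icc 1 n, X n t ω
          - ∫ u in Icc (0:ℝ) 1, (∫ ω', Xt u 0 ω' ∂μ)) 1 μ)
      atTop (nhds 0) := by
  obtain ⟨M, hM⟩ := hmom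
  have hint : ∀ u ∈ Icc (0 : ℝ) 1, Integrable (Xt u 0) μ := fun u hu =>
    memLp_one_iff_integrable.1
      ⟨(hXtmeas u 0).aestronglyMeasurable, (hM u hu).trans_lt ENNReal.ofReal_lt_top⟩
  set m : ℝ → ℝ := fun u => ∫ ω, Xt u 0 ω ∂μ
  have hm_cont : ContinuousOn m (Icc 0 1) := continuousOn_of_enorm_sub_le_rpow hα
    fun u hu v hv => (enorm_integral_sub_integral_le (hint u hu) (hint v hv)).trans
      (hhoelder u hu v hv 0)
  have hrate : Tendsto (fun n : ℕ => ENNReal.ofReal (CB * (n : ℝ) ^ (-α))) atTop (𝓝 0) := by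
    simpa using ENNReal.tendsto_ofReal
      (((tendsto_rpow_neg_atTop hα).comp tendsto_natCast_atTop_atTop).const_mul CB)
  have happrox_avg := tendsto_eLpNorm_inv_smul_sum_Icc_of_le le_rfl
    (f := fun n t ω => X n t ω - Xt (t / n) t ω)
    (fun n t => ((hXmeas n t).sub (hXtmeas _ _)).aestronglyMeasurable) hrate fun n t ht => by
      rw [Finset.mem_Icc] at ht
      exact happrox n (ht.1.trans ht.2) t ht.1 ht.2
  have hcentered :=
    tendsto_eLpNorm_inv_smul_sum_sub_integral_rescaled hXtmeas hstat hint hα hhoelder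
  have hriemann := (hm_cont.tendsto_riemannSum.sub_const (∫ u in Icc (0 : ℝ) 1, m u)).enorm
  rw [sub_self, enorm_zero] at hriemann
  refine tendsto_of_tendsto_of_tendsto_of_le_of_le tendsto_const_nhds
    (by simpa using (happrox_avg.add hcentered).add hriemann) (fun _ => zero_le) fun n =>
      eLpNorm_inv_mul_sum_sub_le le_rfl _ (fun t => (hXmeas n t).aestronglyMeasurable)
        (fun t => (hXtmeas _ _).aestronglyMeasurable) _ _ _

/-- **Global law of large numbers** (Theorem 2.6(i)): under Assumption (S1) with `q = 1`
and `0 < α ≤ 1`, `(1/n) ∑_{t=1}^n X_{t,n} → ∫_0^1 E X̃_0(u) du` in `L¹`. -/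
theorem lln_global {Ω : Type*} [MeasurableSpace Ω] (μ : Measure Ω) [IsProbabilityMeasure μ]
    (X : ℕ → ℕ → Ω → ℝ) (Xt : ℝ → ℤ → Ω → ℝ)
    (hXmeas : ∀ n t, Measurable (X n t))
    (hXtmeas : ∀ u t, Measurable (Xt u t))
    (hstat : ∀ u ∈ Icc (0:ℝ) 1, StatErg μ (fun t => Xt u t))
    (α : ℝ) (hα : 0 < α) (hα1 : α ≤ 1) (CB : ℝ) (hCB : 0 < CB)
    -- (S1), with q = 1 :
    (hmom : ∃ M : ℝ, ∀ u ∈ Icc (0:ℝ) 1, eLpNorm (Xt u 0) 1 μ ≤ ENNReal.ofReal M)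
    (hhoelder : ∀ u ∈ Icc (0:ℝ) 1, ∀ v ∈ Icc (0:ℝ) 1, ∀ t : ℤ,
      eLpNorm (fun ω => Xt u t ω - Xt v t ω) 1 μ ≤ ENNReal.ofReal (CB * |u - v| ^ α))
    (happrox : ∀ n : ℕ, 1 ≤ n → ∀ t : ℕ, 1 ≤ t → t ≤ n →
      eLpNorm (fun ω => X n t ω - Xt ((t : ℝ) / (n : ℝ)) (t : ℤ) ω) 1 μ
        ≤ ENNReal.ofReal (CB * (n : ℝ) ^ (-α))) :
    Tendsto (fun n : ℕ =>
        eLpNorm (fun ω => (n : ℝ)⁻¹ * ∑ t ∈ Finset.Icc 1 n, X n t ω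
          - ∫ u in Icc (0:ℝ) 1, (∫ ω', Xt u 0 ω' ∂μ)) 1 μ)
      atTop (nhds 0) :=
  lln_global_general μ X Xt hXmeas hXtmeas hstat α hα CB hmom hhoelder happrox
end
end
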